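/- For the linear tree L_n with n vertices, the coefficient e_{L_n} from the collapse recursion e_T = −Σ_{m<n_T} Σ_{∪Tₖ≃T} e_{T/{Tₖ}} ∏ₖ a_{Tₖ}, e_• = 1, equals 1/n when n is odd (e.g. e_{L₃}=1/3, e_{L₅}=1/5, e_{L₇}=1/7) and 0 when n is even. -/

import Mathlib

open scoped Classical

/-- An (oriented, labelled) graph on a finite set of natural-number vertices,
given by its vertex set and an oriented edge relation. -/
structure DiGraph where
  verts : Finset ℕ
  E : ℕ → ℕ → Prop

namespace DiGraph

/-- The underlying (unoriented) simple graph on the vertex set. -/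
def symGraph (G : DiGraph) : SimpleGraph {x : ℕ // x ∈ G.verts} where
  Adj a b := (G.E a.1 b.1 ∨ G.E b.1 a.1) ∧ a ≠ b
  symm := ⟨fun a b h => ⟨h.1.symm, h.2.symm⟩⟩
  loopless := ⟨fun a h => h.2 rfl⟩

/-- `G` is an oriented unrooted labelled tree: its edges join vertices of `G`,
no edge occurs in both orientations, and the underlying simple graph is a tree. -/
def IsOTree (G : DiGraph) : Prop :=
  (∀ i j, G.E i j → i ∈ G.verts ∧ j ∈ G.verts) ∧
  (∀ i j, G.E i j → ¬ G.E j i) ∧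
  G.symGraph.IsTree

/-- The number `n_v⁺` of edges oriented into the vertex `v`. -/
noncomputable def inDeg (G : DiGraph) (v : ℕ) : ℕ :=
  (G.verts.filter fun w => G.E w v).card

/-- The graph obtained by deleting the vertex `v`. -/
def delV (G : DiGraph) (v : ℕ) : DiGraph :=
  ⟨G.verts.erase v, fun i j => G.E i j ∧ i ≠ v ∧ j ≠ v⟩

/-- The subgraph induced on a set `s` of vertices. -/
def induce (G : DiGraph) (s : Finset ℕ) : DiGraph :=
  ⟨s, fun i j => G.E i j ∧ i ∈ s ∧ j ∈ s⟩

/-- The vertex set of a connected component of (the underlying graph of) `G`. -/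
noncomputable def compVerts (G : DiGraph) (c : G.symGraph.ConnectedComponent) : Finset ℕ :=
  G.verts.filter fun x => ∃ h : x ∈ G.verts, G.symGraph.connectedComponentMk ⟨x, h⟩ = c

/-- The subgraph of `G` given by a connected component. -/
noncomputable def component (G : DiGraph) (c : G.symGraph.ConnectedComponent) : DiGraph :=
  G.induce (G.compVerts c)

/-- `a : DiGraph → ℚ` satisfies the defining recursion of the tree coefficients `a_T`:
`a_• = 1` for the one-vertex tree, and for a tree `T` with at least two vertices
`a_T = (1/n_T) Σ_{v ∈ V_T} (−1)^{n_v⁺} ∏_s a_{T_s(v)}`,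
the product running over the connected components of `T` with the vertex `v` deleted. -/
def ARec (a : DiGraph → ℚ) : Prop :=
  (∀ G : DiGraph, G.IsOTree → G.verts.card = 1 → a G = 1) ∧
  (∀ G : DiGraph, G.IsOTree → 2 ≤ G.verts.card →
    a G = (1 / (G.verts.card : ℚ)) * ∑ v ∈ G.verts, (-1 : ℚ) ^ (G.inDeg v) *
      ∏ᶠ c : (G.delV v).symGraph.ConnectedComponent, a ((G.delV v).component c))

end DiGraph

namespace DiGraph

/-- `P` is a decomposition of the tree `G` into non-intersecting subtrees:
a partition of the vertex set of `G` into nonempty blocks, each of which induces a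
(connected) subtree of `G`. -/
def IsDecomp (G : DiGraph) (P : Finset (Finset ℕ)) : Prop :=
  (∀ s ∈ P, s.Nonempty) ∧
  (∀ s ∈ P, ∀ t ∈ P, s ≠ t → Disjoint s t) ∧
  P.biUnion id = G.verts ∧
  (∀ s ∈ P, (G.induce s).IsOTree)

/-- The quotient graph `T/{Tₖ}` obtained from `G` by collapsing each block of the
decomposition `P` to a single vertex (represented by the largest element of the block);
two blocks are joined, with the induced orientation, whenever some edge of `G` joins
them. -/
noncomputable def quotGraph (G : DiGraph) (P : Finset (Finset ℕ)) : DiGraph :=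
  ⟨P.image fun s => s.sup id,
   fun b b' => b ≠ b' ∧ ∃ s ∈ P, ∃ t ∈ P, s.sup id = b ∧ t.sup id = b' ∧
     ∃ i ∈ s, ∃ j ∈ t, G.E i j⟩

/-- `e : DiGraph → ℚ` satisfies, relative to `a`, the defining recursion of the
coefficients `e_T`:  `e_• = 1` and, for a tree with at least two vertices,
`e_T = − Σ_{m=1}^{n_T−1} Σ_{∪ₖ Tₖ ≃ T} e_{T/{Tₖ}} ∏ₖ a_{Tₖ}`,
the sum running over all decompositions of `T` into `m < n_T` non-intersecting subtrees
(equivalently, decompositions with at least one non-trivial subtree). -/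
def ERec (a e : DiGraph → ℚ) : Prop :=
  (∀ G : DiGraph, G.IsOTree → G.verts.card = 1 → e G = 1) ∧
  (∀ G : DiGraph, G.IsOTree → 2 ≤ G.verts.card →
    e G = - ∑ P ∈ (G.verts.powerset.powerset).filter
        (fun P => G.IsDecomp P ∧ P.card < G.verts.card),
      e (G.quotGraph P) * ∏ s ∈ P, a (G.induce s))

end DiGraph

/-- The linear tree `L_{n+1} = •—•—···—•` with `n+1` vertices `0,…,n` and all edges
`i → i+1` oriented in the same direction. -/
def linTree (n : ℕ) : DiGraph :=
  ⟨Finset.range (n + 1), fun i j => j = i + 1 ∧ j ≤ n⟩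

/-!
On linear trees both recursions only see the number of vertices. Deleting a vertex of `L_n`
leaves two linear trees, and the two end vertices contribute opposite terms, so the recursion for
`a` says that `A = ∑_{k ≥ 1} a_{L_k} X^k` solves `A' = 1 - A²`, i.e. `A = tanh X`. The subtrees
of a linear tree are its intervals and collapsing them gives again a linear tree, so the
decompositions of `L_n` into `m` subtrees contribute `e_{L_m} [X^n] A^m`, and the recursion for
`e` says `∑_m e_{L_m} A^m = X`. Hence `∑_m e_{L_m} Y^m = arctanh Y`, whose coefficients are `1/m`
for odd `m` and `0` for even `m`. The inversion is done coefficientwise: differentiating `A^(m+1)`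
gives `(n+1) [X^(n+1)] A^(m+1) = (m+1) ([X^n] A^m - [X^n] A^(m+2))`, which telescopes once
multiplied by `m e_{L_m}`, that is by `1` for odd `m` and `0` for even `m`.
-/

open Finset

namespace Finset

def Consecutive (t : Finset ℕ) (i j : ℕ) : Prop :=
  i ∈ t ∧ j ∈ t ∧ i < j ∧ ∀ k ∈ t, k ≤ i ∨ j ≤ k

def OrdConnectedIn (s t : Finset ℕ) : Prop :=
  ∀ x ∈ s, ∀ y ∈ s, ∀ z ∈ t, x ≤ z → z ≤ y → z ∈ s

def rank (t : Finset ℕ) (x : ℕ) : ℕ := #(t.filter (· < x))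

def initSeg (t : Finset ℕ) (k : ℕ) : Finset ℕ := t.filter (t.rank · < k)

variable {t : Finset ℕ} {a b : ℕ}

theorem exists_consecutive {i y : ℕ} (hi : i ∈ t) (hy : y ∈ t) (hiy : i < y) :
    ∃ j, t.Consecutive i j ∧ j ≤ y := by
  have hne : (t.filter (i < ·)).Nonempty := ⟨y, mem_filter.2 ⟨hy, hiy⟩⟩
  obtain ⟨hjt, hij⟩ := mem_filter.1 ((t.filter (i < ·)).min'_mem hne)
  refine ⟨_, ⟨hi, hjt, hij, fun k hk => ?_⟩, min'_le _ _ (mem_filter.2 ⟨hy, hiy⟩)⟩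
  by_cases hik : k ≤ i
  · exact Or.inl hik
  · exact Or.inr (min'_le _ _ (mem_filter.2 ⟨hk, by omega⟩))

theorem Consecutive.right_unique {c : ℕ} (h : t.Consecutive a b) (h' : t.Consecutive a c) :
    b = c := by
  rcases h.2.2.2 c h'.2.1 with hc | hc <;> rcases h'.2.2.2 b h.2.1 with hb | hb <;>
    have := h.2.2.1 <;> have := h'.2.2.1 <;> omega

theorem Consecutive.le_iff_le {u : ℕ} (h : t.Consecutive a b) (hu : u ∈ t) (hne : a ≠ u) :
    a ≤ u ↔ b ≤ u := by
  rcases h.2.2.2 u hu with hu | hu <;> have := h.2.2.1 <;> omega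

theorem Consecutive.lt_iff_lt {v : ℕ} (h : t.Consecutive a b) (hv : v ∈ t) (hne : b ≠ v) :
    a < v ↔ b < v := by
  rcases h.2.2.2 v hv with hv | hv <;> have := h.2.2.1 <;> omega

theorem Consecutive.of_erase {v : ℕ} (h : (t.erase v).Consecutive a b) (hv : b < v ∨ v < a) :
    t.Consecutive a b := by
  obtain ⟨ha, hb, hab, hbetw⟩ := h
  refine ⟨mem_of_mem_erase ha, mem_of_mem_erase hb, hab, fun k hk => ?_⟩
  by_cases hkv : k = v
  · omega
  · exact hbetw k (mem_erase.2 ⟨hkv, hk⟩)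

theorem card_filter_consecutive {v : ℕ} (hv : v ∈ t) :
    #(t.filter (t.Consecutive · v)) = if t.rank v = 0 then 0 else 1 := by
  split_ifs with h
  · refine card_eq_zero.2 (filter_eq_empty_iff.2 fun w hw hc => ?_)
    exact card_ne_zero.2 ⟨w, mem_filter.2 ⟨hw, hc.2.2.1⟩⟩ h
  · have hne : (t.filter (· < v)).Nonempty := card_ne_zero.1 h
    set w₀ := (t.filter (· < v)).max' hne
    obtain ⟨hw₀, hw₀v⟩ := mem_filter.1 ((t.filter (· < v)).max'_mem hne)
    refine card_eq_one.2 ⟨w₀, eq_singleton_iff_unique_mem.2 ⟨?_, fun w hw => ?_⟩⟩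
    · refine mem_filter.2 ⟨hw₀, hw₀, hv, hw₀v, fun k hk => ?_⟩
      by_cases hkv : k < v
      · exact Or.inl (le_max' _ _ (mem_filter.2 ⟨hk, hkv⟩))
      · exact Or.inr (not_lt.1 hkv)
    · obtain ⟨hw, -, -, hwv, hbetw⟩ := mem_filter.1 hw
      have := le_max' (t.filter (· < v)) w (mem_filter.2 ⟨hw, hwv⟩)
      rcases hbetw _ hw₀ with h' | h' <;> omega

theorem rank_lt_rank {x y : ℕ} (hx : x ∈ t) (hxy : x < y) : t.rank x < t.rank y := by
  refine card_lt_card ⟨monotone_filter_right _ fun z hz => by omega, fun h => ?_⟩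
  simpa using h (mem_filter.2 ⟨hx, hxy⟩)

theorem rank_lt_card {x : ℕ} (hx : x ∈ t) : t.rank x < #t :=
  card_lt_card ⟨filter_subset _ _, fun h => by simpa using h hx⟩

theorem rank_injOn : Set.InjOn t.rank t := by
  intro x hx y hy hxy
  by_contra hne
  rcases Nat.lt_or_gt_of_ne hne with h | h
  · exact (rank_lt_rank hx h).ne hxy
  · exact (rank_lt_rank hy h).ne hxy.symm

theorem sum_rank {M : Type*} [AddCommMonoid M] (F : ℕ → M) :
    ∑ x ∈ t, F (t.rank x) = ∑ i ∈ range #t, F i := by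
  have himage : t.image t.rank = range #t :=
    eq_of_subset_of_card_le (fun i hi => by
        obtain ⟨x, hx, rfl⟩ := mem_image.1 hi
        exact mem_range.2 (rank_lt_card hx))
      (by rw [card_range, card_image_of_injOn rank_injOn])
  rw [← himage, sum_image rank_injOn]

theorem card_filter_gt_add_rank {x : ℕ} (hx : x ∈ t) :
    #(t.filter (x < ·)) + t.rank x + 1 = #t := by
  have hsplit : t.filter (x < ·) ∪ t.filter (· < x) = t.erase x := by
    ext y
    by_cases hy : y ∈ t
    · simp only [mem_union, mem_filter, mem_erase, hy, and_true, true_and]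
      omega
    · simp [hy]
  rw [rank, ← card_union_of_disjoint, hsplit, card_erase_add_one hx]
  exact disjoint_filter.2 fun y _ h1 h2 => by omega

theorem initSeg_subset (k : ℕ) : t.initSeg k ⊆ t := filter_subset _ _

theorem card_initSeg {k : ℕ} (hk : k ≤ #t) : #(t.initSeg k) = k := by
  have hrange : (range #t).filter (· < k) = range k := by
    ext i
    simp only [mem_filter, mem_range]
    omega
  rw [initSeg, card_filter, sum_rank (fun i => if i < k then 1 else 0), ← card_filter, hrange,
    card_range]

theorem initSeg_succ_nonempty {k : ℕ} (hk : k < #t) : (t.initSeg (k + 1)).Nonempty := by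
  rw [← card_pos, card_initSeg hk]
  omega

theorem card_sdiff_initSeg {k : ℕ} (hk : k ≤ #t) : #(t \ t.initSeg k) = #t - k := by
  rw [card_sdiff_of_subset (initSeg_subset k), card_initSeg hk]

theorem mem_initSeg_of_le {k x : ℕ} (hk : 0 < k) (hx : x ∈ t) (hmin : ∀ y ∈ t, x ≤ y) :
    x ∈ t.initSeg k := by
  refine mem_filter.2 ⟨hx, ?_⟩
  rw [rank, filter_eq_empty_iff.2 fun y hy => not_lt.2 (hmin y hy), card_empty]
  exact hk

theorem eq_initSeg {s : Finset ℕ} (hst : s ⊆ t) (hs : ∀ x ∈ s, ∀ y ∈ t, y ≤ x → y ∈ s) :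
    s = t.initSeg #s := by
  refine eq_of_subset_of_card_le (fun x hx => mem_filter.2 ⟨hst hx, ?_⟩)
    (card_initSeg (card_le_card hst)).le
  calc t.rank x ≤ #(s.erase x) :=
        card_le_card fun y hy => by
          obtain ⟨hyt, hyx⟩ := mem_filter.1 hy
          exact mem_erase.2 ⟨hyx.ne, hs x hx y hyt hyx.le⟩
    _ < #s := card_erase_lt_of_mem hx

theorem initSeg_ordConnectedIn (k : ℕ) : (t.initSeg k).OrdConnectedIn t := by
  intro x _ y hy z hz _ hzy
  have hrank : t.rank z ≤ t.rank y := card_le_card (monotone_filter_right _ fun w hw => by omega)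
  exact mem_filter.2 ⟨hz, lt_of_le_of_lt hrank (mem_filter.1 hy).2⟩

theorem sdiff_initSeg_ordConnectedIn (k : ℕ) : (t \ t.initSeg k).OrdConnectedIn t := by
  intro x hx y hy z hz hxz _
  have hrank : t.rank x ≤ t.rank z := card_le_card (monotone_filter_right _ fun w hw => by omega)
  simp only [mem_sdiff, initSeg, mem_filter, not_and, not_lt] at hx ⊢
  exact ⟨hz, fun _ => (hx.2 hx.1).trans hrank⟩

theorem filter_lt_ordConnectedIn (t : Finset ℕ) (v : ℕ) : (t.filter (· < v)).OrdConnectedIn t :=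
  fun _ _ _ hy _ hz _ hzy => mem_filter.2 ⟨hz, lt_of_le_of_lt hzy (mem_filter.1 hy).2⟩

theorem filter_gt_ordConnectedIn (t : Finset ℕ) (v : ℕ) : (t.filter (v < ·)).OrdConnectedIn t :=
  fun _ hx _ _ _ hz hxz _ => mem_filter.2 ⟨hz, lt_of_lt_of_le (mem_filter.1 hx).2 hxz⟩

theorem sum_range_even_sub {M : Type*} [AddCommGroup M] (g : ℕ → M) (N : ℕ) :
    ∑ m ∈ range (2 * N), (if Even m then g m - g (m + 2) else 0) = g 0 - g (2 * N) := by
  induction N with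
  | zero => simp
  | succ N ih =>
    rw [show 2 * (N + 1) = 2 * N + 1 + 1 by ring, sum_range_succ, sum_range_succ, ih,
      if_pos (even_two_mul N), if_neg (by simp), add_zero, sub_add_sub_cancel]

theorem sup_id_mem {s : Finset ℕ} (hs : s.Nonempty) : s.sup id ∈ s := by
  simpa using sup_mem_of_nonempty (f := id) hs

end Finset

namespace SimpleGraph

theorem Reachable.iff_of_forall_adj {V : Type*} {K : SimpleGraph V} (p : V → Prop)
    (h : ∀ a b, K.Adj a b → (p a ↔ p b)) {x y : V} (hr : K.Reachable x y) : p x ↔ p y := by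
  obtain ⟨w⟩ := hr
  induction w with
  | nil => rfl
  | cons hadj _ ih => exact (h _ _ hadj).trans ih

theorem reachable_of_forall_consecutive {t : Finset ℕ} {K : SimpleGraph t} {x y : t}
    (hxy : (x : ℕ) ≤ y)
    (hadj : ∀ a b : t, (x : ℕ) ≤ a → (b : ℕ) ≤ y → t.Consecutive a b → K.Adj a b) :
    K.Reachable x y := by
  obtain ⟨x, hx⟩ := x
  induction hd : (y : ℕ) - x using Nat.strong_induction_on generalizing x with
  | _ d ih =>
    rcases hxy.eq_or_lt with hxy | hxy
    · rw [Subtype.ext hxy]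
    obtain ⟨j, hj, hjy⟩ := Finset.exists_consecutive hx y.2 hxy
    refine (hadj ⟨x, hx⟩ ⟨j, hj.2.1⟩ le_rfl hjy hj).reachable.trans ?_
    exact ih _ (by have := hj.2.2.1; omega) j hj.2.1 hjy
      (fun a b ha hb => hadj a b (hj.2.2.1.le.trans ha) hb) rfl

end SimpleGraph

namespace PowerSeries

noncomputable def arctanhCoeff (m : ℕ) : ℚ := if Odd m then 1 / m else 0

theorem arctanhCoeff_succ_mul (m : ℕ) :
    (m + 1 : ℚ) * arctanhCoeff (m + 1) = if Even m then 1 else 0 := by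
  by_cases hm : Even m
  · rw [arctanhCoeff, if_pos hm.add_one, if_pos hm]
    push_cast
    field_simp
  · rw [arctanhCoeff, if_neg (Nat.not_odd_iff_even.2 (Nat.not_even_iff_odd.1 hm).add_one),
      if_neg hm, mul_zero]

variable {A : ℚ⟦X⟧}

theorem coeff_pow_of_lt (hA : constantCoeff A = 0) {m n : ℕ} (hnm : n < m) :
    coeff n (A ^ m) = 0 := by
  obtain ⟨B, rfl⟩ := X_dvd_iff.2 hA
  rw [mul_pow, coeff_X_pow_mul', if_neg (not_le.2 hnm)]

theorem coeff_pow_self (hA : constantCoeff A = 0) (m : ℕ) :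
    coeff m (A ^ m) = coeff 1 A ^ m := by
  obtain ⟨B, rfl⟩ := X_dvd_iff.2 hA
  rw [mul_pow, coeff_X_pow_mul', if_pos le_rfl, Nat.sub_self, coeff_zero_eq_constantCoeff_apply,
    map_pow, coeff_succ_X_mul, coeff_zero_eq_constantCoeff_apply]

variable (hA0 : constantCoeff A = 0) (hA : d⁄dX ℚ A = 1 - A ^ 2)
include hA0 hA

theorem coeff_one_of_derivative_eq : coeff 1 A = 1 := by
  have := congrArg (coeff 0) hA
  rw [coeff_derivative, map_sub, coeff_one, if_pos rfl, sq, coeff_mul,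
    Finset.Nat.antidiagonal_zero, sum_singleton, coeff_zero_eq_constantCoeff_apply, hA0] at this
  simpa using this

omit hA0 in
theorem succ_mul_coeff_succ_pow_succ (m n : ℕ) :
    (n + 1 : ℚ) * coeff (n + 1) (A ^ (m + 1)) =
      (m + 1) * (coeff n (A ^ m) - coeff n (A ^ (m + 2))) := by
  have hder := Derivation.leibniz_pow (d⁄dX ℚ) A (m + 1)
  rw [Nat.add_sub_cancel, smul_eq_mul, hA, mul_sub, mul_one, ← pow_add] at hder
  have hc := congrArg (coeff n) hder
  rw [coeff_derivative, map_nsmul, nsmul_eq_mul, map_sub] at hc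
  push_cast at hc
  linear_combination hc

/-- `arctanh ∘ A = X` coefficientwise, i.e. `A = tanh X`. -/
theorem sum_arctanhCoeff_mul_coeff_pow (n : ℕ) :
    ∑ m ∈ range (n + 1), arctanhCoeff m * coeff n (A ^ m) = if n = 1 then 1 else 0 := by
  have hpad : ∀ k N, k + 1 ≤ N → ∑ m ∈ range N, arctanhCoeff m * coeff k (A ^ m) =
      ∑ m ∈ range (k + 1), arctanhCoeff m * coeff k (A ^ m) := by
    intro k N hN
    rw [← sum_range_add_sum_Ico _ hN, add_eq_left]
    exact sum_eq_zero fun m hm => by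
      rw [coeff_pow_of_lt hA0 (by simp at hm; omega), mul_zero]
  rcases n with _ | n
  · simp [arctanhCoeff]
  refine mul_left_cancel₀ (by positivity : (n + 1 : ℚ) ≠ 0) ?_
  rw [← hpad (n + 1) (2 * (n + 1) + 1) (by omega), mul_sum, sum_range_succ', arctanhCoeff,
    if_neg (by decide), zero_mul, mul_zero, add_zero]
  calc ∑ m ∈ range (2 * (n + 1)),
        (n + 1 : ℚ) * (arctanhCoeff (m + 1) * coeff (n + 1) (A ^ (m + 1)))
      = ∑ m ∈ range (2 * (n + 1)),
          (if Even m then coeff n (A ^ m) - coeff n (A ^ (m + 2)) else 0) := by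
        refine sum_congr rfl fun m _ => ?_
        rw [mul_left_comm, succ_mul_coeff_succ_pow_succ hA, ← mul_assoc, mul_comm _ (_ + 1),
          arctanhCoeff_succ_mul]
        split_ifs <;> ring
    _ = coeff n 1 - coeff n (A ^ (2 * (n + 1))) := by
        rw [sum_range_even_sub (fun m => coeff n (A ^ m)), pow_zero]
    _ = (n + 1 : ℚ) * if n + 1 = 1 then 1 else 0 := by
        rw [coeff_one, coeff_pow_of_lt hA0 (by omega), sub_zero]
        rcases n with _ | n <;> simp

theorem sum_range_arctanhCoeff_mul_coeff_pow {n : ℕ} (hn : 2 ≤ n) :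
    ∑ m ∈ range n, arctanhCoeff m * coeff n (A ^ m) = -arctanhCoeff n := by
  have h := sum_arctanhCoeff_mul_coeff_pow hA0 hA n
  rw [if_neg (by omega), sum_range_succ, coeff_pow_self hA0, coeff_one_of_derivative_eq hA0 hA,
    one_pow, mul_one] at h
  linarith

end PowerSeries

attribute [ext] DiGraph

namespace DiGraph

open PowerSeries

theorem induce_induce (G : DiGraph) {s t : Finset ℕ} (hst : s ⊆ t) :
    (G.induce t).induce s = G.induce s := by
  ext i j
  · rfl
  · simp only [induce]
    constructor
    · exact fun h => ⟨h.1.1, h.2⟩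
    · exact fun h => ⟨⟨h.1, hst h.2.1, hst h.2.2⟩, h.2⟩

theorem delV_induce (G : DiGraph) {v : ℕ} {s : Finset ℕ} (hv : v ∉ s) :
    (G.delV v).induce s = G.induce s := by
  ext i j
  · rfl
  · simp only [induce, delV]
    constructor
    · exact fun h => ⟨h.1.1, h.2⟩
    · exact fun h => ⟨⟨h.1, ne_of_mem_of_not_mem h.2.1 hv, ne_of_mem_of_not_mem h.2.2 hv⟩, h.2⟩

theorem compVerts_connectedComponentMk (H : DiGraph) {s : Finset ℕ}
    (hreach : ∀ x y, H.symGraph.Reachable x y ↔ ((x : ℕ) ∈ s ↔ (y : ℕ) ∈ s)) (x : H.verts) :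
    H.compVerts (H.symGraph.connectedComponentMk x) =
      H.verts.filter fun y => decide (y ∈ s) = decide ((x : ℕ) ∈ s) := by
  ext y
  simp only [compVerts, mem_filter, SimpleGraph.ConnectedComponent.eq, hreach, decide_eq_decide]
  exact ⟨fun ⟨hy, _, h⟩ => ⟨hy, h⟩, fun ⟨hy, h⟩ => ⟨hy, hy, h⟩⟩

theorem finprod_component_of_reachable_iff {M : Type*} [CommMonoid M] (H : DiGraph)
    {s : Finset ℕ} (hs : s ⊆ H.verts)
    (hreach : ∀ x y, H.symGraph.Reachable x y ↔ ((x : ℕ) ∈ s ↔ (y : ℕ) ∈ s))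
    (f : DiGraph → M) :
    ∏ᶠ c, f (H.component c) =
      (if s.Nonempty then f (H.induce s) else 1) *
        (if (H.verts \ s).Nonempty then f (H.induce (H.verts \ s)) else 1) := by
  let side : H.symGraph.ConnectedComponent → Bool :=
    SimpleGraph.ConnectedComponent.lift (fun x => decide ((x : ℕ) ∈ s)) fun x y w _ => by
      simpa using (hreach x y).1 w.reachable
  let part (b : Bool) : Finset ℕ := H.verts.filter fun y => decide (y ∈ s) = b
  have hinj : Function.Injective side := by
    intro c d hcd
    induction c using SimpleGraph.ConnectedComponent.ind
    induction d using SimpleGraph.ConnectedComponent.ind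
    exact SimpleGraph.ConnectedComponent.eq.2 ((hreach _ _).2 (by simpa [side] using hcd))
  have hcomp : ∀ c, H.compVerts c = part (side c) := fun c => by
    induction c using SimpleGraph.ConnectedComponent.ind with
    | h x => exact H.compVerts_connectedComponentMk hreach x
  have hrange : ∀ b, b ∈ Set.range side ↔ (part b).Nonempty := by
    refine fun b => ⟨?_, fun ⟨x, hx⟩ =>
      ⟨H.symGraph.connectedComponentMk ⟨x, (mem_filter.1 hx).1⟩, (mem_filter.1 hx).2⟩⟩
    rintro ⟨c, rfl⟩
    induction c using SimpleGraph.ConnectedComponent.ind with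
    | h x => exact ⟨x, mem_filter.2 ⟨x.2, rfl⟩⟩
  have htrue : part true = s := by
    ext x
    simp only [part, mem_filter, decide_eq_true_eq]
    exact ⟨And.right, fun hx => ⟨hs hx, hx⟩⟩
  have hfalse : part false = H.verts \ s := by
    ext x
    simp [part]
  classical
  calc ∏ᶠ c, f (H.component c) = ∏ᶠ c, f (H.induce (part (side c))) := by
        simp only [component, hcomp]
    _ = ∏ᶠ b ∈ Set.range side, f (H.induce (part b)) :=
        (finprod_mem_range (f := fun b => f (H.induce (part b))) hinj).symm
    _ = _ := by
        simp only [finprod_eq_prod_of_fintype, Fintype.prod_bool, finprod_eq_if, hrange, htrue,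
          hfalse]

/-- `G` is a linear tree `L_n` up to an increasing relabelling of its vertices. -/
def IsLin (G : DiGraph) : Prop := ∀ i j, G.E i j ↔ G.verts.Consecutive i j

theorem card_linTree_verts (n : ℕ) : #(linTree n).verts = n + 1 := Finset.card_range _

theorem linTree_isLin (n : ℕ) : (linTree n).IsLin := by
  intro i j
  simp only [linTree, Finset.Consecutive, Finset.mem_range]
  constructor
  · rintro ⟨rfl, hj⟩
    exact ⟨by omega, by omega, by omega, fun k _ => by omega⟩
  · rintro ⟨hi, hj, hij, hbetw⟩
    have := hbetw (i + 1) (by omega)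
    omega

namespace IsLin

variable {G : DiGraph} (hG : G.IsLin)
include hG

theorem symGraph_adj {x y : G.verts} :
    G.symGraph.Adj x y ↔ G.verts.Consecutive x y ∨ G.verts.Consecutive y x := by
  simp only [symGraph, hG _ _, ne_eq, and_iff_left_iff_imp]
  rintro (h | h) rfl <;> exact lt_irrefl _ h.2.2.1

theorem preconnected : G.symGraph.Preconnected := by
  have hup : ∀ x y : G.verts, (x : ℕ) ≤ y → G.symGraph.Reachable x y := fun x y hxy =>
    SimpleGraph.reachable_of_forall_consecutive hxy fun a b _ _ h =>
      (hG.symGraph_adj).2 (Or.inl h)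
  intro x y
  rcases le_total (x : ℕ) y with hxy | hxy
  · exact hup x y hxy
  · exact (hup y x hxy).symm

theorem isAcyclic : G.symGraph.IsAcyclic := by
  refine SimpleGraph.isAcyclic_iff_forall_adj_isBridge.2 fun x y hxy => ?_
  wlog h : G.verts.Consecutive x y generalizing x y
  · rw [Sym2.eq_swap]
    exact this y x hxy.symm (((hG.symGraph_adj).1 hxy).resolve_left h)
  rw [SimpleGraph.isBridge_iff]
  intro hreach
  -- removing the edge `xy` leaves no edge joining `{z ≤ x}` to `{z > x}`
  have hcut : ∀ a b, (G.symGraph.deleteEdges {s(x, y)}).Adj a b →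
      ((a : ℕ) ≤ x ↔ (b : ℕ) ≤ x) := by
    intro a b hab
    rw [SimpleGraph.deleteEdges_adj, Set.mem_singleton_iff] at hab
    wlog hc : G.verts.Consecutive a b generalizing a b
    · rw [Sym2.eq_swap] at hab
      exact (this b a ⟨hab.1.symm, hab.2⟩ (((hG.symGraph_adj).1 hab.1).resolve_left hc)).symm
    refine hc.le_iff_le x.2 fun hax => hab.2 ?_
    have hay : a = x := Subtype.ext hax
    subst hay
    rw [Subtype.ext (hc.right_unique h)]
  exact not_le.2 h.2.2.1 ((hreach.iff_of_forall_adj _ hcut).1 le_rfl)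

theorem isOTree (hne : G.verts.Nonempty) : G.IsOTree := by
  refine ⟨fun i j hij => ?_, fun i j hij hji => ?_, ?_⟩
  · rw [hG] at hij
    exact ⟨hij.1, hij.2.1⟩
  · rw [hG] at hij hji
    exact lt_asymm hij.2.2.1 hji.2.2.1
  · have : Nonempty G.verts := hne.to_subtype
    exact ⟨⟨hG.preconnected⟩, hG.isAcyclic⟩

theorem induce_of_ordConnectedIn {s : Finset ℕ} (hsub : s ⊆ G.verts)
    (hs : s.OrdConnectedIn G.verts) :
    (G.induce s).IsLin := by
  intro i j
  simp only [DiGraph.induce, hG i j]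
  constructor
  · rintro ⟨⟨-, -, hij, hbetw⟩, hi, hj⟩
    exact ⟨hi, hj, hij, fun k hk => hbetw k (hsub hk)⟩
  · rintro ⟨hi, hj, hij, hbetw⟩
    refine ⟨⟨hsub hi, hsub hj, hij, fun k hk => ?_⟩, hi, hj⟩
    by_contra! hk'
    have := hbetw k (hs i hi j hj k hk hk'.1.le hk'.2.le)
    omega

theorem ordConnectedIn_of_isOTree {s : Finset ℕ} (hT : (G.induce s).IsOTree) :
    s.OrdConnectedIn G.verts := by
  intro x hx y hy z hz hxz hzy
  by_contra hzs
  have hcut : ∀ a b, (G.induce s).symGraph.Adj a b → ((a : ℕ) < z ↔ (b : ℕ) < z) := by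
    rintro a b ⟨hab | hab, -⟩
    · exact ((hG _ _).1 hab.1).lt_iff_lt hz fun h => hzs (h ▸ b.2)
    · exact (((hG _ _).1 hab.1).lt_iff_lt hz fun h => hzs (h ▸ a.2)).symm
  have hside := (hT.2.2.connected.preconnected ⟨x, hx⟩ ⟨y, hy⟩).iff_of_forall_adj _ hcut
  exact not_lt.2 hzy (hside.1 (lt_of_le_of_ne hxz fun h => hzs (h ▸ hx)))

theorem inDeg_eq {v : ℕ} (hv : v ∈ G.verts) :
    G.inDeg v = if G.verts.rank v = 0 then 0 else 1 := by
  simp only [inDeg, hG _ v]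
  exact Finset.card_filter_consecutive hv

theorem reachable_delV_iff {v : ℕ} (hv : v ∈ G.verts) (x y : (G.delV v).verts) :
    (G.delV v).symGraph.Reachable x y ↔ ((x : ℕ) < v ↔ (y : ℕ) < v) := by
  have hne : ∀ z : (G.delV v).verts, (z : ℕ) ≠ v := fun z => (Finset.mem_erase.1 z.2).1
  constructor
  · refine fun h => h.iff_of_forall_adj (fun z : (G.delV v).verts => (z : ℕ) < v) ?_
    rintro a b ⟨⟨hab, -, hb⟩ | ⟨hab, -, ha⟩, -⟩
    · exact ((hG _ _).1 hab).lt_iff_lt hv hb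
    · exact (((hG _ _).1 hab).lt_iff_lt hv ha).symm
  · intro hside
    wlog hxy : (x : ℕ) ≤ y generalizing x y
    · exact (this y x hside.symm (by omega)).symm
    refine SimpleGraph.reachable_of_forall_consecutive hxy fun a b hxa hby hab => ?_
    have := hne x; have := hne y
    have hab' : G.verts.Consecutive a b := hab.of_erase (by omega)
    exact ⟨Or.inl ⟨(hG a b).2 hab', hne a, hne b⟩, fun h => (h ▸ hab'.2.2.1).false⟩

theorem finprod_component_delV {M : Type*} [CommMonoid M] {v : ℕ} (hv : v ∈ G.verts)
    (f : DiGraph → M) :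
    ∏ᶠ c, f ((G.delV v).component c) =
      (if (G.verts.filter (· < v)).Nonempty then f (G.induce (G.verts.filter (· < v))) else 1) *
        (if (G.verts.filter (v < ·)).Nonempty then f (G.induce (G.verts.filter (v < ·)))
          else 1) := by
  have hmem : ∀ z : (G.delV v).verts, (z : ℕ) ∈ G.verts.filter (· < v) ↔ (z : ℕ) < v :=
    fun z => by rw [mem_filter]; exact and_iff_right (mem_of_mem_erase z.2)
  have hsub : G.verts.filter (· < v) ⊆ (G.delV v).verts := fun x hx => by
    obtain ⟨hx, hxv⟩ := mem_filter.1 hx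
    exact mem_erase.2 ⟨hxv.ne, hx⟩
  have hright : (G.delV v).verts \ G.verts.filter (· < v) = G.verts.filter (v < ·) := by
    ext x
    by_cases hx : x ∈ G.verts
    · simp only [delV, mem_sdiff, mem_erase, mem_filter, hx, true_and, and_true]
      omega
    · simp [delV, hx]
  rw [finprod_component_of_reachable_iff _ hsub fun x y =>
      (hG.reachable_delV_iff hv x y).trans (by rw [hmem, hmem]),
    hright, delV_induce _ (by simp), delV_induce _ (by simp)]

end IsLin

section

/-- The value `a_{L_k}` of `a` on the linear tree with `k` vertices. At `k = 0` it reads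
`a (linTree 0)`, which `ARec` makes `1`: the value of an empty product of components. -/
noncomputable def linVal (a : DiGraph → ℚ) (k : ℕ) : ℚ := a (linTree (k - 1))

/-- The right-hand side of `ARec` at a linear tree with `n` vertices, the deleted vertex having
`i` vertices to its left. -/
noncomputable def linRecSum (a : DiGraph → ℚ) (n : ℕ) : ℚ :=
  1 / n * ∑ i ∈ range n, (-1) ^ (if i = 0 then 0 else 1) * (linVal a i * linVal a (n - 1 - i))

variable {a : DiGraph → ℚ}

namespace ARec

theorem linVal_of_le_one (ha : ARec a) {k : ℕ} (hk : k ≤ 1) : linVal a k = 1 :=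
  ha.1 _ ((linTree_isLin _).isOTree (by simp [linTree])) (by simp [card_linTree_verts]; omega)

theorem eq_linRecSum (ha : ARec a) {G : DiGraph} (hG : G.IsLin) (hn : 2 ≤ #G.verts)
    (ih : ∀ H : DiGraph, H.IsLin → H.verts.Nonempty → #H.verts < #G.verts →
      a H = linVal a #H.verts) :
    a G = linRecSum a #G.verts := by
  have hside : ∀ s ⊆ G.verts, s.OrdConnectedIn G.verts → #s < #G.verts →
      (if s.Nonempty then a (G.induce s) else 1) = linVal a #s := by
    intro s hsub hs hcard
    split_ifs with hne
    · exact ih _ (hG.induce_of_ordConnectedIn hsub hs) hne hcard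
    · rw [not_nonempty_iff_eq_empty.1 hne, card_empty, ha.linVal_of_le_one zero_le_one]
  rw [ha.2 G (hG.isOTree (card_pos.1 (by omega))) hn, linRecSum, ← sum_rank]
  congr 1
  refine sum_congr rfl fun v hv => ?_
  have hcard := card_filter_gt_add_rank hv
  rw [hG.inDeg_eq hv, hG.finprod_component_delV hv,
    hside _ (filter_subset _ _) (filter_lt_ordConnectedIn _ v) (by unfold rank at hcard; omega),
    hside _ (filter_subset _ _) (filter_gt_ordConnectedIn _ v) (by omega)]
  simp only [rank] at hcard ⊢
  rw [show #(G.verts.filter (v < ·)) = #G.verts - 1 - #(G.verts.filter (· < v)) by omega]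

theorem eq_linVal (ha : ARec a) {G : DiGraph} (hG : G.IsLin) (hne : G.verts.Nonempty) :
    a G = linVal a #G.verts := by
  induction hn : #G.verts using Nat.strong_induction_on generalizing G with
  | _ n ih =>
    obtain hn1 | hn2 : n ≤ 1 ∨ 2 ≤ n := by omega
    · rw [ha.linVal_of_le_one hn1]
      exact ha.1 G (hG.isOTree hne) (by have := card_pos.2 hne; omega)
    · have hlin := linTree_isLin (n - 1)
      have hlen : #(linTree (n - 1)).verts = n := by rw [card_linTree_verts]; omega
      calc a G = linRecSum a #G.verts :=
            ha.eq_linRecSum hG (by omega) fun H hH hHne hlt => ih _ (hn ▸ hlt) hH hHne rfl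
        _ = a (linTree (n - 1)) := by
            rw [hn, ha.eq_linRecSum hlin (by omega) fun H hH hHne hlt =>
              ih _ (hlen ▸ hlt) hH hHne rfl, hlen]

theorem linVal_eq_linRecSum (ha : ARec a) {n : ℕ} (hn : 2 ≤ n) :
    linVal a n = linRecSum a n := by
  have hlen : #(linTree (n - 1)).verts = n := by rw [card_linTree_verts]; omega
  rw [linVal, ha.eq_linRecSum (linTree_isLin _) (by omega)
    (fun H hH hne _ => ha.eq_linVal hH hne), hlen]

end ARec

noncomputable def linSeries (a : DiGraph → ℚ) : ℚ⟦X⟧ :=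
  PowerSeries.mk fun k => if k = 0 then 0 else linVal a k

theorem constantCoeff_linSeries : constantCoeff (linSeries a) = 0 := by
  rw [← coeff_zero_eq_constantCoeff_apply, linSeries, coeff_mk, if_pos rfl]

/-- The recursion of `ARec` on linear trees is the Riccati equation `A' = 1 - A²`: the terms
where the deleted vertex is an end vertex cancel, the others give `-A²`. -/
theorem ARec.derivative_linSeries (ha : ARec a) : d⁄dX ℚ (linSeries a) = 1 - linSeries a ^ 2 := by
  ext k
  rw [coeff_derivative, map_sub, coeff_one, sq, coeff_mul,
    Finset.Nat.sum_antidiagonal_eq_sum_range_succ_mk]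
  simp only [linSeries, coeff_mk, if_neg k.succ_ne_zero]
  rcases k with _ | k
  · simp [ha.linVal_of_le_one]
  rw [ha.linVal_eq_linRecSum (by omega), linRecSum, sum_range_succ, sum_range_succ',
    sum_range_succ, sum_range_succ']
  simp only [if_pos, if_neg (Nat.succ_ne_zero _), Nat.sub_self, Nat.sub_zero,
    ha.linVal_of_le_one zero_le_one, add_tsub_cancel_right, pow_one, pow_zero]
  push_cast
  field_simp
  have hmid : ∑ i ∈ range k, linVal a (i + 1) * (if k - i = 0 then 0 else linVal a (k - i)) =
      ∑ i ∈ range k, linVal a (i + 1) * linVal a (k - i) :=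
    sum_congr rfl fun i hi => by rw [if_neg (by simp at hi; omega)]
  rw [hmid, sum_neg_distrib]
  ring

end

section

noncomputable def decomps (G : DiGraph) : Finset (Finset (Finset ℕ)) :=
  G.verts.powerset.powerset.filter G.IsDecomp

variable {G : DiGraph} {P : Finset (Finset ℕ)}

namespace IsDecomp

theorem subset (hP : G.IsDecomp P) {s : Finset ℕ} (hs : s ∈ P) : s ⊆ G.verts :=
  hP.2.2.1 ▸ subset_biUnion_of_mem id hs

theorem exists_mem (hP : G.IsDecomp P) {x : ℕ} (hx : x ∈ G.verts) : ∃ s ∈ P, x ∈ s := by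
  rw [← hP.2.2.1] at hx
  simpa using hx

theorem eq_of_mem (hP : G.IsDecomp P) {s t : Finset ℕ} (hs : s ∈ P) (ht : t ∈ P) {x : ℕ}
    (hxs : x ∈ s) (hxt : x ∈ t) : s = t := by
  by_contra hst
  exact disjoint_left.1 (hP.2.1 s hs t ht hst) hxs hxt

theorem nonempty (hP : G.IsDecomp P) (hne : G.verts.Nonempty) : P.Nonempty := by
  obtain ⟨x, hx⟩ := hne
  obtain ⟨s, hs, -⟩ := hP.exists_mem hx
  exact ⟨s, hs⟩

theorem erase (hP : G.IsDecomp P) {s : Finset ℕ} (hs : s ∈ P) :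
    (G.induce (G.verts \ s)).IsDecomp (P.erase s) := by
  have hsub : ∀ t ∈ P.erase s, t ⊆ G.verts \ s := fun t ht x hxt => by
    obtain ⟨hts, ht⟩ := mem_erase.1 ht
    exact mem_sdiff.2 ⟨hP.subset ht hxt, fun hxs => hts (hP.eq_of_mem ht hs hxt hxs)⟩
  refine ⟨fun t ht => hP.1 t (mem_of_mem_erase ht),
    fun t ht u hu => hP.2.1 t (mem_of_mem_erase ht) u (mem_of_mem_erase hu), ?_,
    fun t ht => (G.induce_induce (hsub t ht)).symm ▸ hP.2.2.2 t (mem_of_mem_erase ht)⟩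
  refine (biUnion_subset.2 hsub).antisymm fun x hx => ?_
  obtain ⟨hx, hxs⟩ := mem_sdiff.1 hx
  obtain ⟨t, ht, hxt⟩ := hP.exists_mem hx
  exact mem_biUnion.2 ⟨t, mem_erase.2 ⟨fun h => hxs (h ▸ hxt), ht⟩, hxt⟩

theorem insert {s : Finset ℕ} (hP : (G.induce (G.verts \ s)).IsDecomp P) (hsub : s ⊆ G.verts)
    (hne : s.Nonempty) (hT : (G.induce s).IsOTree) : G.IsDecomp (insert s P) := by
  have hdisj : ∀ t ∈ P, Disjoint s t := fun t ht =>
    disjoint_left.2 fun x hxs hxt => (mem_sdiff.1 (hP.subset ht hxt)).2 hxs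
  refine ⟨?_, ?_, ?_, ?_⟩
  · simpa [hne] using hP.1
  · intro t ht u hu htu
    rw [mem_insert] at ht hu
    rcases ht with rfl | ht <;> rcases hu with rfl | hu
    · exact absurd rfl htu
    · exact hdisj u hu
    · exact (hdisj t ht).symm
    · exact hP.2.1 t ht u hu htu
  · rw [biUnion_insert, hP.2.2.1]
    exact union_sdiff_of_subset hsub
  · intro t ht
    rcases mem_insert.1 ht with rfl | ht
    · exact hT
    · exact G.induce_induce (hP.subset ht) ▸ hP.2.2.2 t ht

end IsDecomp

theorem mem_decomps : P ∈ G.decomps ↔ G.IsDecomp P :=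
  ⟨fun h => (mem_filter.1 h).2, fun h =>
    mem_filter.2 ⟨mem_powerset.2 fun _ hs => mem_powerset.2 (h.subset hs), h⟩⟩

theorem isDecomp_empty_iff : G.IsDecomp ∅ ↔ G.verts = ∅ := by
  simp [IsDecomp, eq_comm]

theorem notMem_of_isDecomp_induce_sdiff {s : Finset ℕ} (hne : s.Nonempty)
    (hP : (G.induce (G.verts \ s)).IsDecomp P) : s ∉ P := fun hs => by
  obtain ⟨x, hx⟩ := hne
  exact (mem_sdiff.1 (hP.subset hs hx)).2 hx

theorem insert_injOn_decomps {s : Finset ℕ} (hne : s.Nonempty) :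
    Set.InjOn (insert s) ((G.induce (G.verts \ s)).decomps : Set (Finset (Finset ℕ))) :=
  fun P hP Q hQ hPQ => by
    rw [← erase_insert (notMem_of_isDecomp_induce_sdiff hne (mem_decomps.1 hP)), hPQ,
      erase_insert (notMem_of_isDecomp_induce_sdiff hne (mem_decomps.1 hQ))]

/-- Distinct initial segments cannot both be blocks: they share the smallest vertex. -/
theorem pairwiseDisjoint_image_insert_initSeg :
    (range #G.verts : Set ℕ).PairwiseDisjoint fun k =>
      (G.induce (G.verts \ G.verts.initSeg (k + 1))).decomps.image
        (insert (G.verts.initSeg (k + 1))) := by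
  intro k hk l hl hkl
  simp only [coe_range, Set.mem_Iio] at hk hl
  simp only [Function.onFun, disjoint_left, mem_image, mem_decomps]
  rintro P ⟨P', -, rfl⟩ ⟨Q', hQ', hPQ⟩
  have hne : G.verts.Nonempty := card_pos.1 (by omega)
  have hmin : ∀ j, G.verts.min' hne ∈ G.verts.initSeg (j + 1) := fun j =>
    mem_initSeg_of_le j.succ_pos (G.verts.min'_mem hne) fun y hy => G.verts.min'_le y hy
  have hk_mem : G.verts.initSeg (k + 1) ∈ insert (G.verts.initSeg (l + 1)) Q' := by
    rw [hPQ]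
    exact mem_insert_self _ _
  rcases mem_insert.1 hk_mem with heq | hmem
  · have := congrArg card heq
    rw [card_initSeg hk, card_initSeg hl] at this
    omega
  · exact (mem_sdiff.1 (hQ'.subset hmem (hmin k))).2 (hmin l)

namespace IsLin

variable (hG : G.IsLin)
include hG

theorem ordConnectedIn_of_isDecomp (hP : G.IsDecomp P) {s : Finset ℕ} (hs : s ∈ P) :
    s.OrdConnectedIn G.verts :=
  hG.ordConnectedIn_of_isOTree (hP.2.2.2 s hs)

theorem induce_of_isDecomp (hP : G.IsDecomp P) {s : Finset ℕ} (hs : s ∈ P) :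
    (G.induce s).IsLin :=
  hG.induce_of_ordConnectedIn (hP.subset hs) (hG.ordConnectedIn_of_isDecomp hP hs)

theorem induce_sdiff_initSeg (k : ℕ) : (G.induce (G.verts \ G.verts.initSeg k)).IsLin :=
  hG.induce_of_ordConnectedIn sdiff_subset (sdiff_initSeg_ordConnectedIn k)

theorem eq_initSeg_of_isDecomp (hP : G.IsDecomp P) {s : Finset ℕ} (hs : s ∈ P) {x : ℕ}
    (hx : x ∈ s) (hmin : ∀ y ∈ G.verts, x ≤ y) : s = G.verts.initSeg #s :=
  eq_initSeg (hP.subset hs) fun z hz y hy hyz =>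
    hG.ordConnectedIn_of_isDecomp hP hs x hx z hz y hy (hmin y hy) hyz

/-- The block containing the smallest vertex is an initial segment. -/
theorem decomps_filter_card_succ (m : ℕ) :
    G.decomps.filter (#· = m + 1) = (range #G.verts).biUnion fun k =>
      ((G.induce (G.verts \ G.verts.initSeg (k + 1))).decomps.filter (#· = m)).image
        (insert (G.verts.initSeg (k + 1))) := by
  ext P
  simp only [mem_filter, mem_biUnion, mem_range, mem_image, mem_decomps]
  constructor
  · rintro ⟨hP, hcard⟩
    obtain ⟨s₀, hs₀⟩ := card_pos.1 (by omega : 0 < #P)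
    have hne : G.verts.Nonempty := (hP.1 s₀ hs₀).mono (hP.subset hs₀)
    obtain ⟨s, hs, hmin⟩ := hP.exists_mem (G.verts.min'_mem hne)
    have hseq := hG.eq_initSeg_of_isDecomp hP hs hmin fun y hy => G.verts.min'_le y hy
    have hs_pos : 0 < #s := card_pos.2 ⟨_, hmin⟩
    refine ⟨#s - 1, by have := card_le_card (hP.subset hs); omega, P.erase s, ?_, ?_⟩
    · rw [Nat.sub_add_cancel hs_pos, ← hseq, card_erase_of_mem hs, hcard]
      exact ⟨hP.erase hs, rfl⟩
    · rw [Nat.sub_add_cancel hs_pos, ← hseq, insert_erase hs]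
  · rintro ⟨k, hk, P', ⟨hP', hcard⟩, rfl⟩
    have hne := initSeg_succ_nonempty hk
    refine ⟨hP'.insert (initSeg_subset _) hne
      ((hG.induce_of_ordConnectedIn (initSeg_subset _) (initSeg_ordConnectedIn _)).isOTree hne), ?_⟩
    rw [card_insert_of_notMem (notMem_of_isDecomp_induce_sdiff hne hP'), hcard]

end IsLin

/-- Decompositions of a linear tree with `n` vertices into `m` blocks are the compositions of `n`
into `m` parts. -/
theorem IsLin.sum_decomps_prod_coeff {A : ℚ⟦X⟧} (hA : constantCoeff A = 0) (m : ℕ) :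
    ∀ {G : DiGraph}, G.IsLin →
      ∑ P ∈ G.decomps.filter (#· = m), ∏ s ∈ P, coeff #s A = coeff #G.verts (A ^ m) := by
  induction m with
  | zero =>
    intro G _
    have hzero : G.decomps.filter (#· = 0) = if G.verts = ∅ then {∅} else ∅ := by
      ext P
      split_ifs with h
      · simp only [mem_filter, mem_decomps, card_eq_zero, mem_singleton]
        exact ⟨And.right, fun hP => ⟨hP ▸ isDecomp_empty_iff.2 h, hP⟩⟩
      · simp only [mem_filter, mem_decomps, card_eq_zero, notMem_empty, iff_false, not_and]
        exact fun hP hP0 => h (isDecomp_empty_iff.1 (hP0 ▸ hP))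
    rw [hzero, pow_zero, coeff_one, apply_ite (fun D => ∑ P ∈ D, ∏ s ∈ P, coeff #s A)]
    simp [card_eq_zero]
  | succ m ih =>
    intro G hG
    rw [hG.decomps_filter_card_succ, sum_biUnion (pairwiseDisjoint_image_insert_initSeg.mono
      fun k => image_subset_image (filter_subset _ _)), pow_succ', coeff_mul,
      Finset.Nat.sum_antidiagonal_eq_sum_range_succ_mk, sum_range_succ']
    simp only [coeff_zero_eq_constantCoeff_apply, hA, zero_mul, add_zero]
    refine sum_congr rfl fun k hk => ?_
    have hk : k < #G.verts := mem_range.1 hk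
    have hne := initSeg_succ_nonempty hk
    rw [sum_image ((insert_injOn_decomps hne).mono (coe_subset.2 (filter_subset _ _))),
      sum_congr rfl fun P hP => prod_insert
        (notMem_of_isDecomp_induce_sdiff hne (mem_decomps.1 (mem_filter.1 hP).1)),
      ← mul_sum, ih (hG.induce_sdiff_initSeg _), card_initSeg hk]
    exact congrArg (_ * coeff · _) (card_sdiff_initSeg hk)

theorem IsLin.sum_decomps_filter_card_lt (hG : G.IsLin) {A : ℚ⟦X⟧} (hA : constantCoeff A = 0)
    (f : ℕ → ℚ) (N : ℕ) :
    ∑ P ∈ G.decomps.filter (#· < N), f #P * ∏ s ∈ P, coeff #s A =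
      ∑ m ∈ range N, f m * coeff #G.verts (A ^ m) := by
  rw [← sum_fiberwise_of_maps_to (g := card) (t := range N)
    fun P hP => mem_range.2 (mem_filter.1 hP).2]
  refine sum_congr rfl fun m hm => ?_
  rw [filter_filter, ← hG.sum_decomps_prod_coeff hA m, mul_sum]
  refine sum_congr (filter_congr fun P _ => ?_) fun P hP => by rw [(mem_filter.1 hP).2]
  simp only [and_iff_right_iff_imp]
  rintro rfl
  exact mem_range.1 hm

theorem card_quotGraph_verts (hP : G.IsDecomp P) : #(G.quotGraph P).verts = #P :=
  card_image_of_injOn fun s hs t ht hst =>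
    hP.eq_of_mem hs ht (sup_id_mem (hP.1 s hs)) (hst ▸ sup_id_mem (hP.1 t ht))

theorem IsLin.consecutive_of_quotGraph (hG : G.IsLin) (hP : G.IsDecomp P) {b b' : ℕ}
    (h : (G.quotGraph P).E b b') : (G.quotGraph P).verts.Consecutive b b' := by
  obtain ⟨hbb', s, hs, t, ht, rfl, rfl, i, hi, j, hj, hij⟩ := h
  obtain ⟨hiv, hjv, hlt, hbetw⟩ := (hG i j).1 hij
  have hst : s ≠ t := by rintro rfl; exact hbb' rfl
  have hs_le : ∀ x ∈ s, x ≤ i := fun x hx => by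
    by_contra! hix
    have hjx : j ≤ x := (hbetw x (hP.subset hs hx)).resolve_left (by omega)
    exact hst (hP.eq_of_mem hs ht
      (hG.ordConnectedIn_of_isDecomp hP hs i hi x hx j hjv hlt.le hjx) hj)
  have ht_ge : j ≤ t.sup id := le_sup (f := id) hj
  have hsup : s.sup id = i := le_antisymm (Finset.sup_le hs_le) (le_sup (f := id) hi)
  refine ⟨mem_image_of_mem _ hs, mem_image_of_mem _ ht, by omega, ?_⟩
  simp only [DiGraph.quotGraph, mem_image]
  rintro c ⟨u, hu, rfl⟩
  by_contra! hc
  have hu_max := sup_id_mem (hP.1 u hu)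
  have hjc : j ≤ u.sup id := (hbetw _ (hP.subset hu hu_max)).resolve_left (by omega)
  have hut := hP.eq_of_mem hu ht hu_max (hG.ordConnectedIn_of_isDecomp hP ht j hj _
    (sup_id_mem (hP.1 t ht)) _ (hP.subset hu hu_max) hjc hc.2.le)
  exact (hut ▸ hc.2).false

theorem IsLin.quotGraph_E_of_consecutive (hG : G.IsLin) (hP : G.IsDecomp P) {b b' : ℕ}
    (h : (G.quotGraph P).verts.Consecutive b b') : (G.quotGraph P).E b b' := by
  obtain ⟨hb, hb', hlt, hbetw⟩ := h
  obtain ⟨s, hs, rfl⟩ := mem_image.1 hb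
  obtain ⟨t, ht, rfl⟩ := mem_image.1 hb'
  have ht_max := sup_id_mem (hP.1 t ht)
  obtain ⟨j, hcons, hjt⟩ :=
    exists_consecutive (hP.subset hs (sup_id_mem (hP.1 s hs))) (hP.subset ht ht_max) hlt
  obtain ⟨u, hu, hju⟩ := hP.exists_mem hcons.2.1
  have htu : t.sup id ≤ u.sup id := (hbetw _ (mem_image_of_mem _ hu)).resolve_left fun h =>
    (lt_of_lt_of_le hcons.2.2.1 (le_sup (f := id) hju)).not_ge h
  have hut := hP.eq_of_mem hu ht (hG.ordConnectedIn_of_isDecomp hP hu j hju _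
    (sup_id_mem (hP.1 u hu)) _ (hP.subset ht ht_max) hjt htu) ht_max
  exact ⟨hlt.ne, s, hs, t, ht, rfl, rfl, _, sup_id_mem (hP.1 s hs), j, hut ▸ hju,
    (hG _ _).2 hcons⟩

/-- Blocks of a linear tree are intervals, so collapsing them yields a linear tree whose vertices
are the block maxima. -/
theorem IsLin.quotGraph (hG : G.IsLin) (hP : G.IsDecomp P) : (G.quotGraph P).IsLin :=
  fun _ _ => ⟨hG.consecutive_of_quotGraph hP, hG.quotGraph_E_of_consecutive hP⟩

end

section

variable {a e : DiGraph → ℚ}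

theorem ARec.eq_coeff_linSeries (ha : ARec a) {G : DiGraph} (hG : G.IsLin)
    (hne : G.verts.Nonempty) : a G = coeff #G.verts (linSeries a) := by
  rw [ha.eq_linVal hG hne, linSeries, coeff_mk, if_neg (card_pos.2 hne).ne']

theorem ERec.eq_arctanhCoeff (ha : ARec a) (he : ERec a e) {G : DiGraph} (hG : G.IsLin)
    (hne : G.verts.Nonempty) : e G = arctanhCoeff #G.verts := by
  induction hn : #G.verts using Nat.strong_induction_on generalizing G with
  | _ n ih =>
  obtain hn1 | hn2 : n = 1 ∨ 2 ≤ n := by have := card_pos.2 hne; omega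
  · rw [he.1 G (hG.isOTree hne) (hn ▸ hn1), hn1]
    simp [arctanhCoeff]
  have hterm : ∀ P ∈ G.decomps.filter (#· < #G.verts),
      e (G.quotGraph P) * ∏ s ∈ P, a (G.induce s) =
        arctanhCoeff #P * ∏ s ∈ P, coeff #s (linSeries a) := by
    intro P hP
    obtain ⟨hP, hlt⟩ := mem_filter.1 hP
    replace hP := mem_decomps.1 hP
    have hquot : (G.quotGraph P).verts.Nonempty := by
      rw [← card_pos, card_quotGraph_verts hP]
      exact (hP.nonempty hne).card_pos
    rw [ih _ (hn ▸ hlt) (hG.quotGraph hP) hquot (card_quotGraph_verts hP)]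
    exact congrArg _ (prod_congr rfl fun s hs =>
      ha.eq_coeff_linSeries (hG.induce_of_isDecomp hP hs) (hP.1 s hs))
  rw [he.2 G (hG.isOTree hne) (hn ▸ hn2), ← filter_filter, ← decomps, sum_congr rfl hterm,
    hG.sum_decomps_filter_card_lt constantCoeff_linSeries, hn,
    sum_range_arctanhCoeff_mul_coeff_pow constantCoeff_linSeries ha.derivative_linSeries hn2,
    neg_neg]

end

end DiGraph

/-- For the linear tree `L_n` with `n` vertices, the coefficient `e_{L_n}` from the
collapse recursion `e_T = −Σ_{m<n_T} Σ_{∪Tₖ≃T} e_{T/{Tₖ}} ∏ₖ a_{Tₖ}`, `e_• = 1`,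
equals `1/n` when `n` is odd (e.g. `e_{L₃} = 1/3`, `e_{L₅} = 1/5`, `e_{L₇} = 1/7`) and
`0` when `n` is even.  (Here `linTree k` is the linear tree with `k+1` vertices.) -/
theorem eT_linear_tree_values (a e : DiGraph → ℚ)
    (ha : DiGraph.ARec a) (he : DiGraph.ERec a e) :
    e (linTree 2) = 1/3 ∧ e (linTree 4) = 1/5 ∧ e (linTree 6) = 1/7 ∧
      (∀ n : ℕ, Even n → e (linTree n) = 1 / ((n : ℚ) + 1)) ∧
      (∀ n : ℕ, Odd n → e (linTree n) = 0) := by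
  have hval : ∀ n, e (linTree n) = PowerSeries.arctanhCoeff (n + 1) := fun n => by
    rw [he.eq_arctanhCoeff ha (DiGraph.linTree_isLin n) (by simp [linTree]),
      DiGraph.card_linTree_verts]
  have heven : ∀ n : ℕ, Even n → e (linTree n) = 1 / ((n : ℚ) + 1) := fun n hn => by
    rw [hval, PowerSeries.arctanhCoeff, if_pos hn.add_one, Nat.cast_succ]
  refine ⟨by norm_num [heven 2 (by decide)], by norm_num [heven 4 (by decide)],
    by norm_num [heven 6 (by decide)], heven, fun n hn => ?_⟩
  rw [hval, PowerSeries.arctanhCoeff, if_neg (Nat.not_odd_iff_even.2 hn.add_one)]
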